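/- arXiv:2105.07359 — 4 statements merged into one kernel-verified Lean document; each statement's English description precedes it below -/
import Mathlib

section
/- For every real number c > 0 with c ≠ 1, the Lebesgue integral ∫₀^∞ log₂(1+η) · c/(η+c)² dη equals (c/(c−1)) · log₂ c. (This is the paper's Theorem 2: the average channel capacity per unit bandwidth for equally probable zero-mean constellations, where the SINR η has density c/(η+c)² on (0,∞).) -/
/-!
Integrating by parts and splitting `1 / ((1 + x) (x + c))` into partial fractions gives the
antiderivative `F x = (log (1 + x) - log (x + c)) / (c - 1) - log (1 + x) / (x + c)` of
`log (1 + x) / (x + c) ^ 2` on `[0, ∞)`. Both terms of `F` vanish at infinity and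
`F 0 = -log c / (c - 1)`; passing from `log₂` to `log` pulls the factor `c / log 2` out of the
integral.
-/

open MeasureTheory Real Filter Topology

noncomputable def logOneAddDivSqAntideriv (c x : ℝ) : ℝ :=
  (c - 1)⁻¹ * (log (1 + x) - log (x + c)) - log (1 + x) / (x + c)

theorem hasDerivAt_logOneAddDivSqAntideriv {c x : ℝ} (hc1 : c ≠ 1) (hx1 : 0 < 1 + x)
    (hxc : 0 < x + c) :
    HasDerivAt (logOneAddDivSqAntideriv c) (log (1 + x) / (x + c) ^ 2) x := by
  have hlog1 : HasDerivAt (fun y => log (1 + y)) (1 / (1 + x)) x := by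
    simpa using ((hasDerivAt_id x).const_add 1).log hx1.ne'
  have hlogc : HasDerivAt (fun y => log (y + c)) (1 / (x + c)) x := by
    simpa using ((hasDerivAt_id x).add_const c).log hxc.ne'
  refine (((hlog1.sub hlogc).const_mul (c - 1)⁻¹).sub
    (hlog1.div ((hasDerivAt_id' x).add_const c) hxc.ne')).congr_deriv ?_
  have : c - 1 ≠ 0 := sub_ne_zero.mpr hc1
  field_simp
  ring

theorem tendsto_log_one_add_sub_log_add_atTop (c : ℝ) :
    Tendsto (fun x => log (1 + x) - log (x + c)) atTop (𝓝 0) := by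
  simpa using ((tendsto_log_comp_add_sub_log 1).sub (tendsto_log_comp_add_sub_log c)).congr
    fun x => by rw [add_comm x 1]; ring

theorem tendsto_log_one_add_div_add_atTop (c : ℝ) :
    Tendsto (fun x => log (1 + x) / (x + c)) atTop (𝓝 0) := by
  have hxc : Tendsto (fun x : ℝ => x + c) atTop atTop :=
    tendsto_atTop_add_const_right _ c tendsto_id
  have hlog : Tendsto (fun x => log (x + c) / (x + c)) atTop (𝓝 0) :=
    isLittleO_log_id_atTop.tendsto_div_nhds_zero.comp hxc
  simpa [← add_div] using ((tendsto_log_one_add_sub_log_add_atTop c).div_atTop hxc).add hlog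

theorem tendsto_logOneAddDivSqAntideriv_atTop (c : ℝ) :
    Tendsto (logOneAddDivSqAntideriv c) atTop (𝓝 0) := by
  have h := ((tendsto_log_one_add_sub_log_add_atTop c).const_mul (c - 1)⁻¹).sub
    (tendsto_log_one_add_div_add_atTop c)
  rwa [mul_zero, sub_zero] at h

theorem integral_Ioi_log_one_add_div_add_sq {c : ℝ} (hc : 0 < c) (hc1 : c ≠ 1) :
    ∫ x in Set.Ioi 0, log (1 + x) / (x + c) ^ 2 = log c / (c - 1) := by
  rw [integral_Ioi_of_hasDerivAt_of_nonneg'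
    (fun x (hx : 0 ≤ x) => hasDerivAt_logOneAddDivSqAntideriv hc1 (by linarith) (by linarith))
    (fun x (hx : 0 < x) => div_nonneg (log_nonneg (by linarith)) (sq_nonneg _))
    (tendsto_logOneAddDivSqAntideriv_atTop c)]
  simp [logOneAddDivSqAntideriv, div_eq_inv_mul]

/-- Theorem 2 of the paper: the average channel capacity per unit bandwidth for
equally probable zero-mean constellations, where the SINR `η` has density
`c / (η + c)²` on `(0, ∞)`. -/
theorem average_capacity_equiprobable (c : ℝ) (hc : 0 < c) (hc1 : c ≠ 1) :
    ∫ η in Set.Ioi (0 : ℝ), Real.logb 2 (1 + η) * (c / (η + c) ^ 2)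
      = (c / (c - 1)) * Real.logb 2 c := by
  calc ∫ η in Set.Ioi (0 : ℝ), Real.logb 2 (1 + η) * (c / (η + c) ^ 2)
      = c / log 2 * ∫ η in Set.Ioi (0 : ℝ), log (1 + η) / (η + c) ^ 2 := by
        rw [← integral_const_mul]
        congr 1 with η
        rw [logb]
        ring
    _ = (c / (c - 1)) * Real.logb 2 c := by
        rw [integral_Ioi_log_one_add_div_add_sq hc hc1, logb]
        ring
end

section
/- Let σ_s, σ_I > 0 and μ₁, μ₂ ∈ ℝ, and set k = √(μ₁²+μ₂²)/σ_s and c = σ_s²/σ_I². Let X₁, X₂, Y₁, Y₂ be independent real random variables with X₁ Gaussian of mean μ₁ and variance σ_s²/2, X₂ Gaussian of mean μ₂ and variance σ_s²/2, and Y₁, Y₂ Gaussian of mean 0 and variance σ_I²/2. Then the random variable η = (X₁²+X₂²)/(Y₁²+Y₂²) has probability density f_{k,c} with respect to Lebesgue measure on (0,∞); that is, the law of η has density η ↦ e^{−k²}(1+k²)·c · e^{η k²/(η+c)} · (η + c/(1+k²)) / (η+c)³ on (0,∞). (This is the Lemma of the paper's Appendix C: the distribution of the SINR, the ratio of the squared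 modulus of a complex Gaussian with mean μ = μ₁ + iμ₂ and total variance σ_s² to the squared modulus of an independent zero-mean complex Gaussian with total variance σ_I².) -/
/-!
Write `η = S / W` with `S = X₁² + X₂²` and `W = Y₁² + Y₂²`, which are independent. In polar
coordinates `W` is exponential, `P(W ≥ x) = exp(-x/σI²)`, so for `a > 0` conditioning on `S` gives
`P(η ≤ a) = P(W ≥ S/a) = E[exp(-S/(a σI²))]`. Completing the square yields the Laplace transform
`E[exp(-l X²)] = (1 + 2lv)^(-1/2) exp(-l μ²/(1 + 2lv))` of the square of a Gaussian of mean `μ` and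
variance `v`. At `l = 1/(a σI²)` the product of these factors for `X₁` and `X₂` is
`G(a) = a/(a+c) · exp(-k²c/(a+c))`, and `G' = f_{k,c}`.
-/

open MeasureTheory ProbabilityTheory Real

/-- The SINR density derived in the paper's Appendix C. -/
noncomputable def sinrDensity (k c η : ℝ) : ℝ :=
  Real.exp (-k ^ 2) * (1 + k ^ 2) * c * Real.exp (η * k ^ 2 / (η + c)) *
    (η + c / (1 + k ^ 2)) / (η + c) ^ 3

open Set Filter
open scoped ENNReal NNReal

lemma ProbabilityTheory.IndepFun.map_comp_prodMk {Ω β γ δ : Type*} [MeasurableSpace Ω]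
    [MeasurableSpace β] [MeasurableSpace γ] [MeasurableSpace δ] {P : Measure Ω}
    [IsFiniteMeasure P] {f : Ω → β} {g : Ω → γ} (hfg : IndepFun f g P) (hf : AEMeasurable f P)
    (hg : AEMeasurable g P) {h : β × γ → δ} (hh : Measurable h) :
    P.map (fun ω => h (f ω, g ω)) = ((P.map f).prod (P.map g)).map h := by
  rw [← (indepFun_iff_map_prod_eq_prod_map_map hf hg).1 hfg,
    AEMeasurable.map_map_of_aemeasurable hh.aemeasurable (hf.prodMk hg)]
  rfl

lemma lintegral_comp_sq_add_sq {f : ℝ → ℝ≥0∞} (hf : Measurable f) :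
    ∫⁻ p : ℝ × ℝ, f (p.1 ^ 2 + p.2 ^ 2) = ENNReal.ofReal π * ∫⁻ t in Ioi 0, f t := by
  have hpolar (p : ℝ × ℝ) : (polarCoord.symm p).1 ^ 2 + (polarCoord.symm p).2 ^ 2 = p.1 ^ 2 := by
    simp only [polarCoord_symm_apply]
    rw [mul_pow, mul_pow, ← mul_add, cos_sq_add_sin_sq, mul_one]
  have himage : (fun r : ℝ => r ^ 2) '' Ioi 0 = Ioi 0 := by
    ext t
    refine ⟨?_, fun ht => ⟨√t, sqrt_pos.2 ht, sq_sqrt ht.le⟩⟩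
    rintro ⟨r, hr, rfl⟩
    exact pow_pos (mem_Ioi.1 hr) 2
  have hsubst : ∫⁻ t in Ioi 0, f t = ∫⁻ r in Ioi 0, ENNReal.ofReal (2 * r) * f (r ^ 2) := by
    rw [← himage, lintegral_image_eq_lintegral_abs_deriv_mul measurableSet_Ioi
      (fun r _ => (hasDerivAt_pow 2 r).hasDerivWithinAt)
      ((pow_left_strictMonoOn₀ two_ne_zero).injOn.mono Ioi_subset_Ici_self), himage]
    refine setLIntegral_congr_fun measurableSet_Ioi fun r hr => ?_
    rw [Nat.cast_ofNat, pow_one, abs_of_pos (mul_pos two_pos hr)]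
  calc ∫⁻ p : ℝ × ℝ, f (p.1 ^ 2 + p.2 ^ 2)
      = ∫⁻ p, ENNReal.ofReal p.1 * f (p.1 ^ 2) * 1
          ∂(volume.restrict (Ioi 0)).prod (volume.restrict (Ioo (-π) π)) := by
        rw [← lintegral_comp_polarCoord_symm, polarCoord_target, Measure.volume_eq_prod,
          Measure.prod_restrict]
        simp_rw [hpolar, smul_eq_mul, mul_one]
    _ = (∫⁻ r in Ioi 0, ENNReal.ofReal r * f (r ^ 2)) * ENNReal.ofReal (2 * π) := by
        rw [lintegral_prod_mul (f := fun r => ENNReal.ofReal r * f (r ^ 2)) (g := fun _ => 1)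
          (by fun_prop) (by fun_prop), lintegral_one, Measure.restrict_apply_univ, volume_Ioo]
        ring_nf
    _ = ENNReal.ofReal π * ∫⁻ t in Ioi 0, f t := by
        rw [hsubst, ← lintegral_const_mul' _ _ ENNReal.ofReal_ne_top,
          ← lintegral_mul_const' _ _ ENNReal.ofReal_ne_top]
        refine lintegral_congr fun r => ?_
        rw [mul_right_comm, ← ENNReal.ofReal_mul' (by positivity), ← mul_assoc (ENNReal.ofReal π),
          ← ENNReal.ofReal_mul pi_pos.le]
        ring_nf

lemma gaussianPDFReal_mul_exp_neg_mul_sq (m : ℝ) {v : ℝ≥0} (hv : v ≠ 0) {l : ℝ} (hl : 0 ≤ l)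
    (x : ℝ) :
    gaussianPDFReal m v x * exp (-(l * x ^ 2))
      = (√(1 + 2 * l * v))⁻¹ * exp (-(l * m ^ 2 / (1 + 2 * l * v)))
        * gaussianPDFReal (m / (1 + 2 * l * v)) (v / (1 + 2 * l * v)).toNNReal x := by
  have hu : 0 < 1 + 2 * l * v := by positivity
  rw [gaussianPDFReal, gaussianPDFReal, Real.coe_toNNReal _ (by positivity), mul_div_assoc',
    sqrt_div' _ hu.le, inv_div]
  have hexp : -(x - m) ^ 2 / (2 * v) + -(l * x ^ 2)
      = -(l * m ^ 2 / (1 + 2 * l * v))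
        + -(x - m / (1 + 2 * l * v)) ^ 2 / (2 * (v / (1 + 2 * l * v))) := by
    field_simp
    ring
  rw [mul_assoc, ← exp_add, hexp, exp_add]
  field_simp

lemma lintegral_exp_neg_mul_sq_gaussianReal (m : ℝ) {v : ℝ≥0} (hv : v ≠ 0) {l : ℝ} (hl : 0 ≤ l) :
    ∫⁻ x, ENNReal.ofReal (exp (-(l * x ^ 2))) ∂gaussianReal m v
      = ENNReal.ofReal ((√(1 + 2 * l * v))⁻¹ * exp (-(l * m ^ 2 / (1 + 2 * l * v)))) := by
  rw [gaussianReal_of_var_ne_zero m hv,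
    lintegral_withDensity_eq_lintegral_mul _ (measurable_gaussianPDF m v) (by fun_prop)]
  simp_rw [Pi.mul_apply, gaussianPDF, ← ENNReal.ofReal_mul (gaussianPDFReal_nonneg _ _ _),
    gaussianPDFReal_mul_exp_neg_mul_sq m hv hl, ENNReal.ofReal_mul (by positivity : 0 ≤
      (√(1 + 2 * l * v))⁻¹ * exp (-(l * m ^ 2 / (1 + 2 * l * v))))]
  rw [lintegral_const_mul _ (by fun_prop), lintegral_gaussianPDFReal_eq_one _
    (Real.toNNReal_pos.2 (by positivity)).ne', mul_one]

noncomputable def gaussianSqNorm (m₁ m₂ : ℝ) (v : ℝ≥0) : Measure ℝ :=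
  ((gaussianReal m₁ v).prod (gaussianReal m₂ v)).map fun p => p.1 ^ 2 + p.2 ^ 2

instance (m₁ m₂ : ℝ) (v : ℝ≥0) : IsProbabilityMeasure (gaussianSqNorm m₁ m₂ v) :=
  Measure.isProbabilityMeasure_map (by fun_prop)

lemma gaussianSqNorm_Iic_zero (m₁ m₂ : ℝ) {v : ℝ≥0} (hv : v ≠ 0) :
    gaussianSqNorm m₁ m₂ v (Iic 0) = 0 := by
  rw [gaussianSqNorm, Measure.map_apply (by fun_prop) measurableSet_Iic]
  refine measure_mono_null (t := {0} ×ˢ univ) (fun p hp => ?_) ?_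
  · simp only [mem_preimage, mem_Iic] at hp
    exact ⟨pow_eq_zero_iff two_ne_zero |>.1 (by nlinarith [sq_nonneg p.1, sq_nonneg p.2]), trivial⟩
  · rw [Measure.prod_prod, (gaussianReal_absolutelyContinuous m₁ hv) (measure_singleton 0),
      zero_mul]

lemma lintegral_exp_neg_mul_gaussianSqNorm (m₁ m₂ : ℝ) {v : ℝ≥0} (hv : v ≠ 0) {l : ℝ}
    (hl : 0 ≤ l) :
    ∫⁻ s, ENNReal.ofReal (exp (-(l * s))) ∂gaussianSqNorm m₁ m₂ v
      = ENNReal.ofReal ((1 + 2 * l * v)⁻¹ * exp (-(l * (m₁ ^ 2 + m₂ ^ 2) / (1 + 2 * l * v)))) := by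
  have hu : 0 < 1 + 2 * l * v := by positivity
  have hsplit (p : ℝ × ℝ) : ENNReal.ofReal (exp (-(l * (p.1 ^ 2 + p.2 ^ 2))))
      = ENNReal.ofReal (exp (-(l * p.1 ^ 2))) * ENNReal.ofReal (exp (-(l * p.2 ^ 2))) := by
    rw [← ENNReal.ofReal_mul (exp_pos _).le, ← exp_add, mul_add, neg_add]
  rw [gaussianSqNorm, lintegral_map (by fun_prop) (by fun_prop)]
  simp_rw [hsplit]
  rw [lintegral_prod_mul (f := fun x => ENNReal.ofReal (exp (-(l * x ^ 2))))
      (g := fun x => ENNReal.ofReal (exp (-(l * x ^ 2)))) (by fun_prop) (by fun_prop),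
    lintegral_exp_neg_mul_sq_gaussianReal m₁ hv hl,
    lintegral_exp_neg_mul_sq_gaussianReal m₂ hv hl, ← ENNReal.ofReal_mul (by positivity)]
  congr 1
  rw [mul_mul_mul_comm, ← mul_inv, mul_self_sqrt hu.le, ← exp_add]
  congr 2
  ring

lemma lintegral_Ioi_exp_neg_mul {r : ℝ} (hr : 0 < r) (x : ℝ) :
    ∫⁻ t in Ioi x, ENNReal.ofReal (r * exp (-r * t)) = ENNReal.ofReal (exp (-r * x)) := by
  rw [← ofReal_integral_eq_lintegral_ofReal
      ((integrableOn_exp_mul_Ioi (neg_lt_zero.2 hr) x).const_mul r)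
      (ae_of_all _ fun t => by positivity),
    integral_const_mul, integral_exp_mul_Ioi (neg_lt_zero.2 hr)]
  field_simp

lemma gaussianSqNorm_Ici {v : ℝ≥0} (hv : v ≠ 0) {x : ℝ} (hx : 0 ≤ x) :
    gaussianSqNorm 0 0 v (Ici x) = ENNReal.ofReal (exp (-x / (2 * v))) := by
  set g : ℝ → ℝ≥0∞ := (Ici x).indicator fun t => ENNReal.ofReal ((2 * π * v)⁻¹ * exp (-t / (2 * v)))
  have hdensity (p : ℝ × ℝ) : ((fun p : ℝ × ℝ => p.1 ^ 2 + p.2 ^ 2) ⁻¹' Ici x).indicator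
      (fun p => gaussianPDF 0 v p.1 * gaussianPDF 0 v p.2) p = g (p.1 ^ 2 + p.2 ^ 2) := by
    simp only [g, indicator, mem_preimage, gaussianPDF, gaussianPDFReal]
    split_ifs
    · rw [← ENNReal.ofReal_mul (by positivity)]
      congr 1
      rw [mul_mul_mul_comm, ← mul_inv, mul_self_sqrt (by positivity), ← exp_add]
      congr 2
      ring
    · rfl
  rw [gaussianSqNorm, Measure.map_apply (by fun_prop) measurableSet_Ici,
    gaussianReal_of_var_ne_zero 0 hv,
    prod_withDensity (measurable_gaussianPDF _ _) (measurable_gaussianPDF _ _),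
    withDensity_apply _ (measurableSet_Ici.preimage (by fun_prop)), ← lintegral_indicator
      (measurableSet_Ici.preimage (by fun_prop)), ← Measure.volume_eq_prod]
  simp_rw [hdensity]
  rw [lintegral_comp_sq_add_sq (Measurable.indicator (by fun_prop) measurableSet_Ici),
    setLIntegral_indicator measurableSet_Ici]
  have hset : (Ici x ∩ Ioi 0 : Set ℝ) =ᵐ[volume] Ioi x := by
    refine (Ioi_ae_eq_Ici.symm.inter EventuallyEq.rfl).trans ?_
    rw [Ioi_inter_Ioi, sup_of_le_left hx]
    exact EventuallyEq.rfl
  rw [Measure.restrict_congr_set hset, ← lintegral_const_mul' _ _ ENNReal.ofReal_ne_top]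
  have hpt (t : ℝ) : ENNReal.ofReal π * ENNReal.ofReal ((2 * π * v)⁻¹ * exp (-t / (2 * v)))
      = ENNReal.ofReal ((2 * (v : ℝ))⁻¹ * exp (-(2 * (v : ℝ))⁻¹ * t)) := by
    rw [← ENNReal.ofReal_mul pi_pos.le]
    congr 1
    field_simp
  simp_rw [hpt]
  rw [lintegral_Ioi_exp_neg_mul (by positivity)]
  congr 2
  field_simp

lemma ProbabilityTheory.IndepFun.map_sq_add_sq_eq_gaussianSqNorm {Ω : Type*}
    [MeasurableSpace Ω] {P : Measure Ω} [IsFiniteMeasure P] {X Y : Ω → ℝ}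
    {m₁ m₂ : ℝ} {v : ℝ≥0} (hXY : IndepFun X Y P) (hX : P.map X = gaussianReal m₁ v)
    (hY : P.map Y = gaussianReal m₂ v) :
    P.map (fun ω => X ω ^ 2 + Y ω ^ 2) = gaussianSqNorm m₁ m₂ v := by
  rw [hXY.map_comp_prodMk (aemeasurable_of_map_neZero (by rw [hX]; infer_instance))
    (aemeasurable_of_map_neZero (by rw [hY]; infer_instance))
    (h := fun p => p.1 ^ 2 + p.2 ^ 2) (by fun_prop), hX, hY, gaussianSqNorm]

lemma map_div_prod_Iic_of_pos {μ ν : Measure ℝ} [SFinite ν] (hν : ν (Iic 0) = 0) {a : ℝ}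
    (ha : 0 < a) :
    ((μ.prod ν).map fun p => p.1 / p.2) (Iic a) = ∫⁻ s, ν (Ici (s / a)) ∂μ := by
  rw [Measure.map_apply (by fun_prop) measurableSet_Iic,
    Measure.prod_apply (measurableSet_Iic.preimage (by fun_prop))]
  have hpos : ∀ᵐ w ∂ν, 0 < w := by
    rw [ae_iff]
    simp only [not_lt]
    exact hν
  refine lintegral_congr fun s => measure_congr (eventuallyEq_set.2 ?_)
  filter_upwards [hpos] with w hw
  simp only [mem_preimage, mem_Iic, mem_Ici]
  rw [div_le_iff₀ hw, div_le_iff₀ ha, mul_comm]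

lemma map_div_prod_Iic_of_nonpos {μ ν : Measure ℝ} [SFinite ν] (hμ : μ (Iic 0) = 0)
    (hν : ν (Iic 0) = 0) {a : ℝ} (ha : a ≤ 0) :
    ((μ.prod ν).map fun p => p.1 / p.2) (Iic a) = 0 := by
  rw [Measure.map_apply (by fun_prop) measurableSet_Iic]
  refine measure_mono_null (t := Iic 0 ×ˢ univ ∪ univ ×ˢ Iic 0) (fun p hp => ?_)
    (measure_union_null (by rw [Measure.prod_prod, hμ, zero_mul])
      (by rw [Measure.prod_prod, hν, mul_zero]))
  by_contra hp'
  simp only [mem_union, mem_prod, mem_Iic, mem_univ, and_true, true_and, not_or, not_le] at hp'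
  exact (mem_Iic.1 hp).not_gt (ha.trans_lt (div_pos hp'.1 hp'.2))

lemma lintegral_Ioc_ofReal_deriv {g g' : ℝ → ℝ} {a b : ℝ} (hab : a ≤ b)
    (hcont : ContinuousOn g (Icc a b)) (hderiv : ∀ x ∈ Ioo a b, HasDerivAt g (g' x) x)
    (hnonneg : ∀ x ∈ Ioc a b, 0 ≤ g' x) :
    ∫⁻ x in Ioc a b, ENNReal.ofReal (g' x) = ENNReal.ofReal (g b - g a) := by
  have hint : IntegrableOn g' (Ioc a b) := intervalIntegral.integrableOn_deriv_of_nonneg hcont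
    hderiv fun x hx => hnonneg x (Ioo_subset_Ioc_self hx)
  rw [← ofReal_integral_eq_lintegral_ofReal hint
      ((ae_restrict_iff' measurableSet_Ioc).2 (ae_of_all _ hnonneg)),
    ← intervalIntegral.integral_of_le hab, intervalIntegral.integral_eq_sub_of_hasDerivAt_of_le hab
      hcont hderiv ((intervalIntegrable_iff_integrableOn_Ioc_of_le hab).2 hint)]

noncomputable def sinrCDF (k c t : ℝ) : ℝ := t / (t + c) * exp (-(k ^ 2 * c / (t + c)))

lemma hasDerivAt_sinrCDF (k : ℝ) {c t : ℝ} (ht : t + c ≠ 0) :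
    HasDerivAt (sinrCDF k c) (sinrDensity k c t) t := by
  have hexp : exp (-k ^ 2) * exp (t * k ^ 2 / (t + c)) = exp (-(k ^ 2 * c / (t + c))) := by
    rw [← exp_add]
    congr 1
    field_simp
    ring
  have hdensity : sinrDensity k c t
      = c * (t + c + t * k ^ 2) / (t + c) ^ 3 * exp (-(k ^ 2 * c / (t + c))) := by
    rw [sinrDensity, ← hexp]
    field_simp
    ring
  have hfrac : HasDerivAt (fun t => t / (t + c)) (c / (t + c) ^ 2) t :=
    ((hasDerivAt_id' t).div ((hasDerivAt_id' t).add_const c) ht).congr_deriv (by field_simp; ring)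
  have hexpo : HasDerivAt (fun t => -(k ^ 2 * c / (t + c))) (k ^ 2 * c / (t + c) ^ 2) t :=
    ((hasDerivAt_const t (k ^ 2 * c)).div ((hasDerivAt_id' t).add_const c) ht).neg.congr_deriv
      (by field_simp; ring)
  refine (hfrac.mul hexpo.exp).congr_deriv ?_
  rw [hdensity]
  field_simp

lemma sinrDensity_nonneg (k : ℝ) {c t : ℝ} (hc : 0 < c) (ht : 0 ≤ t) : 0 ≤ sinrDensity k c t := by
  have : 0 < 1 + k ^ 2 := by positivity
  unfold sinrDensity
  positivity

lemma lintegral_Ioc_sinrDensity (k : ℝ) {c a : ℝ} (hc : 0 < c) (ha : 0 ≤ a) :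
    ∫⁻ t in Ioc 0 a, ENNReal.ofReal (sinrDensity k c t) = ENNReal.ofReal (sinrCDF k c a) := by
  have hderiv (t : ℝ) (ht : 0 ≤ t) : HasDerivAt (sinrCDF k c) (sinrDensity k c t) t :=
    hasDerivAt_sinrCDF k (by positivity)
  rw [lintegral_Ioc_ofReal_deriv ha
      (fun t ht => (hderiv t ht.1).continuousAt.continuousWithinAt)
      (fun t ht => hderiv t ht.1.le) (fun t ht => sinrDensity_nonneg k hc ht.1.le)]
  simp [sinrCDF]

lemma withDensity_ite_pos_Iic (f : ℝ → ℝ) (a : ℝ) :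
    volume.withDensity (fun η => ENNReal.ofReal (if 0 < η then f η else 0)) (Iic a)
      = ∫⁻ η in Ioc 0 a, ENNReal.ofReal (f η) := by
  have hind : (fun η => ENNReal.ofReal (if 0 < η then f η else 0))
      = (Ioi 0).indicator fun η => ENNReal.ofReal (f η) := by
    ext η
    by_cases hη : 0 < η <;> simp [hη]
  rw [withDensity_apply _ measurableSet_Iic, hind, setLIntegral_indicator measurableSet_Ioi,
    Ioi_inter_Iic]

lemma map_div_gaussianSqNorm_Iic {m₁ m₂ k c : ℝ} {v w : ℝ≥0} (hv : v ≠ 0) (hw : w ≠ 0)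
    (hk : k ^ 2 = (m₁ ^ 2 + m₂ ^ 2) / (2 * v)) (hc : c = v / w) (a : ℝ) :
    ((gaussianSqNorm m₁ m₂ v).prod (gaussianSqNorm 0 0 w)).map (fun p => p.1 / p.2) (Iic a)
      = ∫⁻ t in Ioc 0 a, ENNReal.ofReal (sinrDensity k c t) := by
  rcases le_or_gt a 0 with ha | ha
  · rw [map_div_prod_Iic_of_nonpos (gaussianSqNorm_Iic_zero _ _ hv) (gaussianSqNorm_Iic_zero _ _ hw)
      ha, Ioc_eq_empty (not_lt.2 ha), Measure.restrict_empty, lintegral_zero_measure]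
  have hS : ∀ᵐ s ∂gaussianSqNorm m₁ m₂ v, 0 ≤ s := by
    rw [ae_iff]
    exact measure_mono_null (fun s hs => (not_le.1 hs).le) (gaussianSqNorm_Iic_zero _ _ hv)
  rw [map_div_prod_Iic_of_pos (gaussianSqNorm_Iic_zero _ _ hw) ha,
    lintegral_Ioc_sinrDensity k (by rw [hc]; positivity) ha.le]
  calc ∫⁻ s, gaussianSqNorm 0 0 w (Ici (s / a)) ∂gaussianSqNorm m₁ m₂ v
      = ∫⁻ s, ENNReal.ofReal (exp (-((a * (2 * w))⁻¹ * s))) ∂gaussianSqNorm m₁ m₂ v := by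
        refine lintegral_congr_ae (hS.mono fun s hs => ?_)
        dsimp only
        rw [gaussianSqNorm_Ici hw (div_nonneg hs ha.le)]
        congr 2
        field_simp
    _ = ENNReal.ofReal (sinrCDF k c a) := by
        rw [lintegral_exp_neg_mul_gaussianSqNorm m₁ m₂ hv (by positivity), sinrCDF, hk, hc]
        have hu : 1 + 2 * (a * (2 * w))⁻¹ * v = (a + v / w) / a := by
          field_simp
        rw [hu, inv_div]
        congr 3
        field_simp

/-- Lemma of the paper's Appendix C: the SINR, i.e. the ratio of the squared modulus of a
complex Gaussian with mean `μ₁ + i μ₂` and total variance `σs²` to the squared modulus of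
an independent zero-mean complex Gaussian with total variance `σI²`, has density
`sinrDensity k c` on `(0, ∞)`, where `k = √(μ₁² + μ₂²)/σs` and `c = σs²/σI²`. -/
theorem sinr_distribution
    {Ω : Type*} [MeasurableSpace Ω] (P : Measure Ω) [IsProbabilityMeasure P]
    (σs σI μ₁ μ₂ : ℝ) (hσs : 0 < σs) (hσI : 0 < σI)
    (X₁ X₂ Y₁ Y₂ : Ω → ℝ)
    (hIndep : iIndepFun ![X₁, X₂, Y₁, Y₂] P)
    (hX₁ : Measure.map X₁ P = gaussianReal μ₁ (Real.toNNReal (σs ^ 2 / 2)))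
    (hX₂ : Measure.map X₂ P = gaussianReal μ₂ (Real.toNNReal (σs ^ 2 / 2)))
    (hY₁ : Measure.map Y₁ P = gaussianReal 0 (Real.toNNReal (σI ^ 2 / 2)))
    (hY₂ : Measure.map Y₂ P = gaussianReal 0 (Real.toNNReal (σI ^ 2 / 2))) :
    Measure.map (fun ω => (X₁ ω ^ 2 + X₂ ω ^ 2) / (Y₁ ω ^ 2 + Y₂ ω ^ 2)) P
      = volume.withDensity fun η => ENNReal.ofReal
          (if 0 < η then sinrDensity (Real.sqrt (μ₁ ^ 2 + μ₂ ^ 2) / σs) (σs ^ 2 / σI ^ 2) η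
           else 0) := by
  have hX₁m : AEMeasurable X₁ P := aemeasurable_of_map_neZero (by rw [hX₁]; infer_instance)
  have hX₂m : AEMeasurable X₂ P := aemeasurable_of_map_neZero (by rw [hX₂]; infer_instance)
  have hY₁m : AEMeasurable Y₁ P := aemeasurable_of_map_neZero (by rw [hY₁]; infer_instance)
  have hY₂m : AEMeasurable Y₂ P := aemeasurable_of_map_neZero (by rw [hY₂]; infer_instance)
  have hmeas (i : Fin 4) : AEMeasurable (![X₁, X₂, Y₁, Y₂] i) P := by
    fin_cases i <;> assumption
  have hsq : Measurable fun p : ℝ × ℝ => p.1 ^ 2 + p.2 ^ 2 := by fun_prop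
  have hSW : IndepFun (fun ω => X₁ ω ^ 2 + X₂ ω ^ 2) (fun ω => Y₁ ω ^ 2 + Y₂ ω ^ 2) P :=
    (hIndep.indepFun_prodMk_prodMk₀ hmeas 0 1 2 3 (by decide) (by decide) (by decide)
      (by decide)).comp hsq hsq
  have hS : P.map (fun ω => X₁ ω ^ 2 + X₂ ω ^ 2) = gaussianSqNorm μ₁ μ₂ (σs ^ 2 / 2).toNNReal :=
    (hIndep.indepFun (i := 0) (j := 1) (by decide)).map_sq_add_sq_eq_gaussianSqNorm hX₁ hX₂
  have hW : P.map (fun ω => Y₁ ω ^ 2 + Y₂ ω ^ 2) = gaussianSqNorm 0 0 (σI ^ 2 / 2).toNNReal :=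
    (hIndep.indepFun (i := 2) (j := 3) (by decide)).map_sq_add_sq_eq_gaussianSqNorm hY₁ hY₂
  rw [hSW.map_comp_prodMk (by fun_prop) (by fun_prop) (h := fun p => p.1 / p.2) (by fun_prop),
    hS, hW]
  refine Measure.ext_of_Iic _ _ fun a => ?_
  rw [withDensity_ite_pos_Iic]
  have hvs : 0 < σs ^ 2 / 2 := by positivity
  have hvI : 0 < σI ^ 2 / 2 := by positivity
  refine map_div_gaussianSqNorm_Iic (Real.toNNReal_pos.2 hvs).ne' (Real.toNNReal_pos.2 hvI).ne'
    ?_ ?_ a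
  · rw [Real.coe_toNNReal _ hvs.le, div_pow, sq_sqrt (by positivity)]
    ring
  · rw [Real.coe_toNNReal _ hvs.le, Real.coe_toNNReal _ hvI.le]
    ring
end

section
/- For every real number a > 0, ∫₀¹ z (ln z) e^{−a z} dz = (1 − e^{−a})/a² − (1/a²)·(E₁(a) + ln a + γ_EM). (This is the evaluation of the integral appearing in I₂₂, equation (26), in the proof of the paper's Theorem 1, obtained by integration by parts.) -/
/-!
Integrating by parts against `e^{-az}` reduces the integral to `∫₀¹ ln z · e^{-az} dz` plus an
elementary term. That integral is the one over `(0, ∞)` minus the one over `(1, ∞)`. The former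
is `-(γ + ln a) / a` by rescaling `∫₀^∞ ln t · e^{-t} dt = Γ'(1) = -γ`; a second integration by
parts, against `e^{-at}`, turns the latter into `E₁(a) / a`.
-/

open MeasureTheory Real

/-- The exponential integral `E₁(x) = ∫ₓ^∞ e^{-t}/t dt`. -/
noncomputable def expIntegralE1 (x : ℝ) : ℝ := ∫ t in Set.Ioi x, Real.exp (-t) / t

open Set Filter Topology

theorem integral_log_mul_exp_neg_Ioi :
    ∫ t in Ioi (0 : ℝ), log t * exp (-t) = -eulerMascheroniConstant := by
  have hGamma : HasDerivAt Complex.Gamma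
      (∫ t : ℝ in Ioi 0, (t : ℂ) ^ ((1 : ℂ) - 1) * (log t * exp (-t))) 1 := by
    refine (Complex.hasDerivAt_GammaIntegral (by norm_num)).congr_of_eventuallyEq ?_
    filter_upwards [Complex.continuous_re.isOpen_preimage _ isOpen_Ioi |>.mem_nhds
      (by norm_num : (1 : ℂ) ∈ Complex.re ⁻¹' Ioi 0)] with s hs
    exact Complex.Gamma_eq_integral hs
  have h := hGamma.unique Complex.hasDerivAt_Gamma_one
  simp only [sub_self, Complex.cpow_zero, one_mul] at h
  exact_mod_cast h

theorem intervalIntegrable_log_mul_exp_neg_mul (a b c : ℝ) :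
    IntervalIntegrable (fun t ↦ log t * exp (-c * t)) volume a b :=
  intervalIntegral.intervalIntegrable_log'.mul_continuousOn (by fun_prop)

theorem integrableOn_log_mul_exp_neg_mul_Ioi_one {a : ℝ} (ha : 0 < a) :
    IntegrableOn (fun t ↦ log t * exp (-a * t)) (Ioi 1) := by
  have hdom : IntegrableOn (fun t ↦ t * exp (-a * t)) (Ioi 1) := by
    simpa using (integrableOn_rpow_mul_exp_neg_mul_rpow (p := 1) (s := 1) (by norm_num)
      zero_lt_one ha).mono_set (Ioi_subset_Ioi zero_le_one)
  refine hdom.mono' (by fun_prop) ?_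
  filter_upwards [ae_restrict_mem measurableSet_Ioi] with t (ht : 1 < t)
  rw [norm_mul, norm_of_nonneg (log_nonneg ht.le), norm_of_nonneg (exp_pos _).le]
  gcongr
  exact log_le_self (by linarith)

theorem integrableOn_exp_neg_mul_div_Ioi_one {a : ℝ} (ha : 0 < a) :
    IntegrableOn (fun t ↦ exp (-a * t) / t) (Ioi 1) := by
  refine (exp_neg_integrableOn_Ioi 1 ha).mono'
    (by fun_prop : Measurable fun t ↦ exp (-a * t) / t).aestronglyMeasurable ?_
  filter_upwards [ae_restrict_mem measurableSet_Ioi] with t (ht : 1 < t)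
  rw [norm_div, norm_of_nonneg (exp_pos _).le, norm_of_nonneg (by linarith)]
  exact div_le_self (exp_pos _).le ht.le

theorem integrableOn_log_mul_exp_neg_mul_Ioi {a : ℝ} (ha : 0 < a) :
    IntegrableOn (fun t ↦ log t * exp (-a * t)) (Ioi 0) := by
  rw [← Ioc_union_Ioi_eq_Ioi zero_le_one]
  exact ((intervalIntegrable_log_mul_exp_neg_mul 0 1 a).1).union
    (integrableOn_log_mul_exp_neg_mul_Ioi_one ha)

theorem integral_exp_neg_mul_Ioi {a : ℝ} (ha : 0 < a) :
    ∫ t in Ioi (0 : ℝ), exp (-a * t) = a⁻¹ := by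
  have hscale := integral_comp_mul_left_Ioi (fun t ↦ exp (-t)) 0 ha
  rw [mul_zero, integral_exp_neg_Ioi_zero, smul_eq_mul, mul_one] at hscale
  simpa only [neg_mul] using hscale

theorem integral_exp_neg_mul_zero_one {a : ℝ} (ha : a ≠ 0) :
    ∫ t in (0 : ℝ)..1, exp (-a * t) = (1 - exp (-a)) / a := by
  rw [intervalIntegral.integral_comp_mul_left exp (neg_ne_zero.2 ha), integral_exp, mul_one,
    mul_zero, exp_zero, smul_eq_mul]
  field_simp
  ring

theorem hasDerivAt_neg_exp_neg_mul_div {a : ℝ} (ha : a ≠ 0) (t : ℝ) :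
    HasDerivAt (fun t ↦ -exp (-a * t) / a) (exp (-a * t)) t :=
  ((((hasDerivAt_id' t).const_mul (-a)).exp.neg).div_const a).congr_deriv (by field_simp)

theorem integral_log_mul_exp_neg_mul_Ioi {a : ℝ} (ha : 0 < a) :
    ∫ t in Ioi (0 : ℝ), log t * exp (-a * t) = -(eulerMascheroniConstant + log a) / a := by
  have hscale := integral_comp_mul_left_Ioi (fun t ↦ log t * exp (-t)) 0 ha
  have hlog_mul : ∫ t in Ioi (0 : ℝ), log (a * t) * exp (-(a * t))
      = log a * a⁻¹ + ∫ t in Ioi (0 : ℝ), log t * exp (-a * t) := by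
    rw [← integral_exp_neg_mul_Ioi ha, ← integral_const_mul,
      ← integral_add ((exp_neg_integrableOn_Ioi 0 ha).const_mul _)
        (integrableOn_log_mul_exp_neg_mul_Ioi ha)]
    refine setIntegral_congr_fun measurableSet_Ioi fun t (ht : 0 < t) ↦ ?_
    rw [log_mul ha.ne' ht.ne', neg_mul]
    ring
  rw [mul_zero, integral_log_mul_exp_neg_Ioi, hlog_mul, smul_eq_mul] at hscale
  field_simp at hscale ⊢
  linarith

theorem expIntegralE1_eq_integral_Ioi_one {a : ℝ} (ha : 0 < a) :
    expIntegralE1 a = ∫ t in Ioi 1, exp (-a * t) / t := by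
  rw [expIntegralE1, ← mul_one a, ← integral_comp_mul_left_Ioi' _ _ ha, mul_one, smul_eq_mul,
    ← integral_const_mul]
  refine setIntegral_congr_fun measurableSet_Ioi fun t _ ↦ ?_
  field_simp

theorem tendsto_log_mul_exp_neg_mul_atTop {a : ℝ} (ha : 0 < a) :
    Tendsto (fun t ↦ log t * exp (-a * t)) atTop (𝓝 0) := by
  have hdom := tendsto_rpow_mul_exp_neg_mul_atTop_nhds_zero 1 a ha
  simp only [rpow_one] at hdom
  refine squeeze_zero' ?_ ?_ hdom
  · filter_upwards [eventually_ge_atTop 1] with t ht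
    exact mul_nonneg (log_nonneg ht) (exp_pos _).le
  · filter_upwards [eventually_ge_atTop 1] with t ht
    gcongr
    exact log_le_self (by linarith)

theorem integral_log_mul_exp_neg_mul_Ioi_one {a : ℝ} (ha : 0 < a) :
    ∫ t in Ioi 1, log t * exp (-a * t) = expIntegralE1 a / a := by
  set v : ℝ → ℝ := fun t ↦ -exp (-a * t) / a
  have hboundary : Tendsto (log * v) (𝓝[>] 1) (𝓝 0) := by
    have : ContinuousAt (log * v) 1 := by fun_prop (disch := norm_num)
    simpa using this.tendsto.mono_left nhdsWithin_le_nhds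
  have hinfty : Tendsto (log * v) atTop (𝓝 0) := by
    have := (tendsto_log_mul_exp_neg_mul_atTop ha).neg.div_const a
    rw [neg_zero, zero_div] at this
    refine this.congr fun t ↦ ?_
    simp only [Pi.mul_apply, v]
    ring
  have hquot : IntegrableOn ((fun t ↦ t⁻¹) * v) (Ioi 1) := by
    refine IntegrableOn.congr_fun ((integrableOn_exp_neg_mul_div_Ioi_one ha).div_const a).neg
      (fun t _ ↦ ?_) measurableSet_Ioi
    simp only [Pi.mul_apply, Pi.neg_apply, v]
    ring
  rw [integral_Ioi_mul_deriv_eq_deriv_mul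
    (fun t (ht : 1 < t) ↦ hasDerivAt_log (zero_lt_one.trans ht).ne')
    (fun t _ ↦ hasDerivAt_neg_exp_neg_mul_div ha.ne' t)
    (integrableOn_log_mul_exp_neg_mul_Ioi_one ha) hquot hboundary hinfty,
    expIntegralE1_eq_integral_Ioi_one ha, sub_self, zero_sub, ← integral_neg, ← integral_div]
  congr 1 with t
  ring

theorem integral_log_mul_exp_neg_mul_zero_one {a : ℝ} (ha : 0 < a) :
    ∫ t in (0 : ℝ)..1, log t * exp (-a * t)
      = -(expIntegralE1 a + log a + eulerMascheroniConstant) / a := by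
  have hsplit := setIntegral_union (Ioc_disjoint_Ioi le_rfl) measurableSet_Ioi
    (intervalIntegrable_log_mul_exp_neg_mul 0 1 a).1
    (integrableOn_log_mul_exp_neg_mul_Ioi_one ha)
  rw [Ioc_union_Ioi_eq_Ioi zero_le_one, integral_log_mul_exp_neg_mul_Ioi ha,
    integral_log_mul_exp_neg_mul_Ioi_one ha] at hsplit
  rw [intervalIntegral.integral_of_le zero_le_one]
  field_simp at hsplit ⊢
  linarith

theorem integral_mul_log_mul_exp_neg_mul_zero_one {a : ℝ} (ha : a ≠ 0) :
    ∫ t in (0 : ℝ)..1, t * log t * exp (-a * t)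
      = ((∫ t in (0 : ℝ)..1, log t * exp (-a * t)) + ∫ t in (0 : ℝ)..1, exp (-a * t)) / a := by
  rw [intervalIntegral.integral_mul_deriv_eq_deriv_mul_of_hasDerivAt
    continuous_mul_log.continuousOn (by fun_prop)
    (fun t ht ↦ hasDerivAt_mul_log (by norm_num at ht; exact ht.1.ne'))
    (fun t _ ↦ hasDerivAt_neg_exp_neg_mul_div ha t)
    (intervalIntegral.intervalIntegrable_log'.add intervalIntegrable_const)
    ((by fun_prop : Continuous fun t ↦ exp (-a * t)).intervalIntegrable 0 1)]
  have hintegrand : ∀ t, (log t + 1) * (-exp (-a * t) / a)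
      = -((log t * exp (-a * t) + exp (-a * t)) / a) := fun t ↦ by ring
  simp_rw [hintegrand]
  rw [intervalIntegral.integral_neg, intervalIntegral.integral_div,
    intervalIntegral.integral_add (intervalIntegrable_log_mul_exp_neg_mul 0 1 a)
    ((by fun_prop : Continuous fun t ↦ exp (-a * t)).intervalIntegrable 0 1)]
  simp

/-- Evaluation of the integral appearing in `I₂₂`, equation (26), in the proof of the
paper's Theorem 1. -/
theorem integral_I22 (a : ℝ) (ha : 0 < a) :
    ∫ z in (0 : ℝ)..1, z * Real.log z * Real.exp (-a * z)
      = (1 - Real.exp (-a)) / a ^ 2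
        - (1 / a ^ 2) * (expIntegralE1 a + Real.log a + Real.eulerMascheroniConstant) := by
  rw [integral_mul_log_mul_exp_neg_mul_zero_one ha.ne', integral_log_mul_exp_neg_mul_zero_one ha,
    integral_exp_neg_mul_zero_one ha.ne']
  field_simp
  ring
end

section
/- Let a > 0 and c > 1 be real numbers. Then ∫₀¹ ln(1 + ((1−c)/c) z) · (1 − (a/(1+a)) z) · e^{−a z} dz = (1/(1+a)) · [ (e^{−c a/(c−1)}/(c−1)) · ∫_{a/(c−1)}^{c a/(c−1)} (e^t/t) dt − (1 − e^{−a})/a ]. (This is the closed-form evaluation of the integral I₃, equations (29)–(35), in the proof of the paper's Theorem 1; note that 1 + ((1−c)/c)z > 1/c > 0 for z ∈ (0,1).) -/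
open MeasureTheory Real Set

/-!
Write `u z = log (1 + ((1 - c) / c) z)` and `v z = (z - 1) / (1 + a) · e^{-a z}`, so that
`v' z = (1 - (a / (1 + a)) z) e^{-a z}`. Since `u 0 = 0 = v 1`, integration by parts leaves
`-∫ u' v`, and `u' v = (1 / (1 + a)) (e^{-a z} - e^{-a z} / (c + (1 - c) z))`. The first piece
integrates to `(1 - e^{-a}) / a`; the substitution `t = (c - (c - 1) z) a / (c - 1)` turns the
second into the exponential-integral term.
-/

lemma integral_exp_mul_zero_one {b : ℝ} (hb : b ≠ 0) :
    ∫ z in (0 : ℝ)..1, exp (b * z) = (exp b - 1) / b := by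
  rw [intervalIntegral.integral_comp_mul_left exp hb, integral_exp, mul_zero, mul_one, exp_zero,
    smul_eq_mul, inv_mul_eq_div]

lemma integral_exp_mul_div_linear {b d m : ℝ} (hb : b ≠ 0) (hm : m ≠ 0) (x y : ℝ) :
    ∫ z in x..y, exp (b * z) / (d + m * z)
      = exp (-(b * d / m)) / m * ∫ t in (b * x + b * d / m)..(b * y + b * d / m), exp t / t := by
  have hsubst : ∀ z, exp (b * z) / (d + m * z)
      = exp (-(b * d / m)) * (b / m) * (exp (b * z + b * d / m) / (b * z + b * d / m)) := by
    intro z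
    have hbm : b / m ≠ 0 := div_ne_zero hb hm
    rw [show b * z + b * d / m = b / m * (d + m * z) by field_simp; ring, mul_assoc,
      ← mul_div_assoc, mul_div_mul_left _ _ hbm, ← mul_div_assoc, ← exp_add]
    congr 2
    field_simp
    ring
  simp_rw [hsubst]
  rw [intervalIntegral.integral_const_mul,
    intervalIntegral.integral_comp_mul_add (fun t => exp t / t) hb, smul_eq_mul]
  field_simp

lemma add_one_sub_mul_pos {c z : ℝ} (hc : 0 < c) (hz : z ∈ uIcc 0 1) : 0 < c + (1 - c) * z := by
  rw [uIcc_of_le zero_le_one] at hz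
  rcases le_total c 1 with h | h <;> nlinarith [hz.1, hz.2]

lemma integral_log_mul_exp_by_parts {a c : ℝ} (ha : 1 + a ≠ 0) (hc : 0 < c) :
    ∫ z in (0 : ℝ)..1, log (1 + ((1 - c) / c) * z) * (1 - (a / (1 + a)) * z) * exp (-a * z)
      = (1 / (1 + a)) * ((∫ z in (0 : ℝ)..1, exp (-a * z) / (c + (1 - c) * z))
          - ∫ z in (0 : ℝ)..1, exp (-a * z)) := by
  have hlin : ∀ z, 1 + (1 - c) / c * z = (c + (1 - c) * z) / c := fun z => by field_simp
  have hlin_ne : ∀ z ∈ uIcc (0 : ℝ) 1, 1 + (1 - c) / c * z ≠ 0 := fun z hz => by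
    rw [hlin]; exact (div_pos (add_one_sub_mul_pos hc hz) hc).ne'
  have hu : ∀ z ∈ uIcc (0 : ℝ) 1, HasDerivAt (fun z => log (1 + (1 - c) / c * z))
      ((1 - c) / c / (1 + (1 - c) / c * z)) z := fun z hz =>
    (by simpa using ((hasDerivAt_id z).const_mul ((1 - c) / c)).const_add 1 :
      HasDerivAt (fun z => 1 + (1 - c) / c * z) ((1 - c) / c) z).log (hlin_ne z hz)
  have hv : ∀ z ∈ uIcc (0 : ℝ) 1, HasDerivAt (fun z => (z - 1) / (1 + a) * exp (-a * z))
      ((1 - (a / (1 + a)) * z) * exp (-a * z)) z := fun z _ => by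
    have hexp : HasDerivAt (fun z => exp (-a * z)) (exp (-a * z) * -a) z := by
      simpa using ((hasDerivAt_id z).const_mul (-a)).exp
    have hpoly : HasDerivAt (fun z => (z - 1) / (1 + a)) (1 / (1 + a)) z := by
      simpa using ((hasDerivAt_id z).sub_const 1).div_const (1 + a)
    refine (hpoly.mul hexp).congr_deriv ?_
    field_simp
    ring
  have hcont_exp : Continuous fun z => exp (-a * z) := by fun_prop
  have hcont_div : ContinuousOn (fun z => exp (-a * z) / (c + (1 - c) * z)) (uIcc 0 1) :=
    hcont_exp.continuousOn.div (by fun_prop) fun z hz => (add_one_sub_mul_pos hc hz).ne'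
  have hparts := intervalIntegral.integral_mul_deriv_eq_deriv_mul hu hv
    (ContinuousOn.intervalIntegrable (by fun_prop (disch := assumption)))
    ((by fun_prop : Continuous fun z => (1 - (a / (1 + a)) * z) * exp (-a * z)).intervalIntegrable
      _ _)
  have hcomb : ∀ z ∈ uIcc (0 : ℝ) 1,
      (1 - c) / c / (1 + (1 - c) / c * z) * ((z - 1) / (1 + a) * exp (-a * z))
        = 1 / (1 + a) * (exp (-a * z) - exp (-a * z) / (c + (1 - c) * z)) := fun z hz => by
    have hpos := (add_one_sub_mul_pos hc hz).ne'
    rw [hlin]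
    field_simp
    ring
  simp only [mul_assoc]
  rw [hparts, intervalIntegral.integral_congr hcomb, intervalIntegral.integral_const_mul,
    intervalIntegral.integral_sub (hcont_exp.intervalIntegrable _ _) hcont_div.intervalIntegrable]
  simp only [sub_self, zero_div, zero_mul, mul_zero, add_zero, log_one, zero_sub]
  ring

/-- Closed-form evaluation of the integral `I₃`, equations (29)–(35), in the proof of the
paper's Theorem 1. -/
theorem integral_I3 (a c : ℝ) (ha : 0 < a) (hc : 1 < c) :
    ∫ z in (0 : ℝ)..1,
        Real.log (1 + ((1 - c) / c) * z) * (1 - (a / (1 + a)) * z) * Real.exp (-a * z)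
      = (1 / (1 + a)) *
          ((Real.exp (-(c * a) / (c - 1)) / (c - 1)) *
              (∫ t in Set.Ioc (a / (c - 1)) (c * a / (c - 1)), Real.exp t / t)
            - (1 - Real.exp (-a)) / a) := by
  have h1c : 1 - c ≠ 0 := by linarith
  have hc1 : c - 1 ≠ 0 := by linarith
  have hle : a / (c - 1) ≤ c * a / (c - 1) := by gcongr; nlinarith
  have hsub := integral_exp_mul_div_linear (d := c) (neg_ne_zero.2 ha.ne') h1c 0 1
  rw [show -a * 0 + -a * c / (1 - c) = c * a / (c - 1) by field_simp; ring,
    show -a * 1 + -a * c / (1 - c) = a / (c - 1) by field_simp; ring,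
    intervalIntegral.integral_symm (a / (c - 1)), intervalIntegral.integral_of_le hle] at hsub
  rw [integral_log_mul_exp_by_parts (by linarith) (by linarith), hsub,
    integral_exp_mul_zero_one (neg_ne_zero.2 ha.ne'),
    show -(-a * c / (1 - c)) = -(c * a) / (c - 1) by field_simp; ring]
  field_simp
  ring
end
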